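/- Let Φ_d = I + τΦ and Ψ_d = τΨ with Φ = [[0,1],[−ω², −√2 ω]] and Ψ = [0, ω²]ᵀ for ω, τ > 0. If P ∈ R^{2×2} is a symmetric solution of the discrete Lyapunov equation Φ_d P Φ_dᵀ − P + σ Ψ_d Ψ_dᵀ = 0 (σ > 0), then its (1,1) entry equals P₁₁ = −τω · (τ²ω² − √2 τω + 2) / (τ³ω³ − 3√2 τ²ω² + 8τω − 4√2) · σ. -/

import Mathlib

open Matrix

/-!
Writing `p, q, r` for the entries of `P`, the Euler-discretized companion matrix is
`!![1, τ; -u, v]` and the noise only enters the `(1,1)` entry. The `(0,0)` entry of the Lyapunov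
equation gives `r = -2q/τ`; the `(0,1)` entry then expresses `p` through `q`, and the `(1,1)` entry
determines `q`. For the Butterworth coefficients the resulting denominator factors as
`τω · (τ³ω³ - 3√2 τ²ω² + 8τω - 4√2)`, and it cannot vanish because `q` times it is the positive
noise intensity `σ τ³ ω⁴`.
-/

theorem one_add_smul_companion (τ a₀ a₁ : ℝ) :
    1 + τ • !![0, 1; -a₀, -a₁] = !![1, τ; -(τ * a₀), 1 - τ * a₁] := by
  ext i j
  fin_cases i <;> fin_cases j <;> simp; ring

theorem smul_col_mul_transpose (σ τ b : ℝ) :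
    σ • ((τ • !![0; b]) * (τ • !![0; b])ᵀ) = !![0, 0; 0, σ * (τ * b) ^ 2] := by
  ext i j
  fin_cases i <;> fin_cases j <;> simp [vecMul, dotProduct, sq]

def companionLyapunovDenom (τ u v : ℝ) : ℝ :=
  u * τ * (1 + v + u * τ) + 2 * u * v * τ + 2 * (v ^ 2 - 1)

section DiscreteLyapunov

variable {τ u v w : ℝ} {P : Matrix (Fin 2) (Fin 2) ℝ}

theorem discreteLyapunov_entry_relations (hτ : τ ≠ 0) (hPsymm : P.IsSymm)
    (hP : !![1, τ; -u, v] * P * !![1, τ; -u, v]ᵀ - P + !![0, 0; 0, w] = 0) :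
    u * P 0 0 = -(1 + v + u * τ) * P 0 1 ∧
      P 0 1 * companionLyapunovDenom τ u v = w * τ := by
  have hsymm : P 1 0 = P 0 1 := hPsymm.apply 0 1
  have e00 := congrFun (congrFun hP 0) 0
  have e01 := congrFun (congrFun hP 0) 1
  have e11 := congrFun (congrFun hP 1) 1
  simp only [Matrix.mul_apply, Fin.sum_univ_two, Matrix.transpose_apply, Matrix.sub_apply,
    Matrix.add_apply, Matrix.zero_apply, Matrix.of_apply, Matrix.cons_val', Matrix.cons_val_zero,
    Matrix.cons_val_one, Matrix.empty_val', Matrix.cons_val_fin_one, hsymm] at e00 e01 e11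
  have hr : τ * P 1 1 = -2 * P 0 1 := by
    apply mul_left_cancel₀ hτ
    linear_combination e00
  refine ⟨?_, ?_⟩
  · linear_combination -e01 + v * hr
  · unfold companionLyapunovDenom
    linear_combination -τ * e11 - u * τ * e01 + (v ^ 2 - 1 + u * v * τ) * hr

theorem discreteLyapunov_apply_zero_zero (hτ : τ ≠ 0) (hw : w ≠ 0) (hPsymm : P.IsSymm)
    (hP : !![1, τ; -u, v] * P * !![1, τ; -u, v]ᵀ - P + !![0, 0; 0, w] = 0) :
    companionLyapunovDenom τ u v ≠ 0 ∧
      P 0 0 * (u * companionLyapunovDenom τ u v) = -(1 + v + u * τ) * (w * τ) := by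
  obtain ⟨hp, hq⟩ := discreteLyapunov_entry_relations hτ hPsymm hP
  refine ⟨fun hD ↦ ?_, ?_⟩
  · rw [hD, mul_zero] at hq
    exact mul_ne_zero hw hτ hq.symm
  · linear_combination companionLyapunovDenom τ u v * hp - (1 + v + u * τ) * hq

end DiscreteLyapunov

/-- Let `Φ_d = I + τΦ` and `Ψ_d = τΨ` with `Φ = [[0,1],[-ω², -√2 ω]]` and `Ψ = [0, ω²]ᵀ` for
`ω, τ > 0`. If `P` is a symmetric solution of the discrete Lyapunov equation
`Φ_d P Φ_dᵀ - P + σ Ψ_d Ψ_dᵀ = 0` with `σ > 0`, then its `(1,1)` entry equals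
`P₁₁ = -τω (τ²ω² - √2 τω + 2)/(τ³ω³ - 3√2 τ²ω² + 8τω - 4√2) · σ`. -/
theorem butterworth_discrete_lyapunov_entry
    (ω τ σ : ℝ) (hω : 0 < ω) (hτ : 0 < τ) (hσ : 0 < σ)
    (Φ : Matrix (Fin 2) (Fin 2) ℝ) (hΦ : Φ = !![0, 1; -ω ^ 2, -Real.sqrt 2 * ω])
    (Ψ : Matrix (Fin 2) (Fin 1) ℝ) (hΨ : Ψ = !![0; ω ^ 2])
    (Φd : Matrix (Fin 2) (Fin 2) ℝ) (hΦd : Φd = 1 + τ • Φ)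
    (Ψd : Matrix (Fin 2) (Fin 1) ℝ) (hΨd : Ψd = τ • Ψ)
    (P : Matrix (Fin 2) (Fin 2) ℝ) (hPsymm : P.IsSymm)
    (hP : Φd * P * Φdᵀ - P + σ • (Ψd * Ψdᵀ) = 0) :
    P 0 0 = -(τ * ω) * ((τ * ω) ^ 2 - Real.sqrt 2 * (τ * ω) + 2) /
      ((τ * ω) ^ 3 - 3 * Real.sqrt 2 * (τ * ω) ^ 2 + 8 * (τ * ω) - 4 * Real.sqrt 2) * σ := by
  subst hΦ hΨ hΦd hΨd
  rw [neg_mul, one_add_smul_companion, smul_col_mul_transpose] at hP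
  obtain ⟨hD, hp⟩ := discreteLyapunov_apply_zero_zero hτ.ne' (by positivity) hPsymm hP
  have hfactor : companionLyapunovDenom τ (τ * ω ^ 2) (1 - τ * (√2 * ω)) =
      τ * ω * ((τ * ω) ^ 3 - 3 * √2 * (τ * ω) ^ 2 + 8 * (τ * ω) - 4 * √2) := by
    unfold companionLyapunovDenom
    linear_combination 2 * (τ * ω) ^ 2 * Real.sq_sqrt (zero_le_two : (0 : ℝ) ≤ 2)
  rw [hfactor] at hD hp
  rw [div_mul_eq_mul_div, eq_div_iff (right_ne_zero_of_mul hD)]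
  apply mul_left_cancel₀ (by positivity : τ ^ 2 * ω ^ 3 ≠ 0)
  linear_combination hp
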